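/- arXiv:1403.6764 — 2 statements merged into one kernel-verified Lean document; each statement's English description precedes it below -/
import Mathlib

section
/- Let (F_k)_{k≥0} be an independent, identically distributed sequence of random n×n real matrices with E[‖F₀‖^m] < ∞, and let x_d(k) = F_{k−1}⋯F₁F₀ x₀ for a deterministic x₀ ∈ ℝ^n. Then for every k ≥ 0, E[x_d(k)^[m]] = (E[F₀^[m]])^k · x₀^[m], where the expectations of vectors and matrices are taken entrywise. -/
open scoped BigOperators
open MeasureTheory ProbabilityTheory
open scoped Matrix.Norms.L2Operator

noncomputable section

open scoped BigOperators


/-- The multi-indices `α : Fin n → ℕ` with `∑ α i = m` form a finite type. -/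
instance multiIdxFintype (n m : ℕ) : Fintype {α : Fin n → ℕ // ∑ i, α i = m} :=
  Fintype.subtype (Finset.Nat.antidiagonalTuple n m) fun _ =>
    Finset.Nat.mem_antidiagonalTuple

/-- The `m`-lift `x^[m]` of a vector `x ∈ ℝⁿ`: the entry indexed by the multi-index `α`
is `√(m!/(α₁!⋯αₙ!)) · x₁^{α₁} ⋯ xₙ^{αₙ}`. -/
def mLift (n m : ℕ) (x : Fin n → ℝ) : {α : Fin n → ℕ // ∑ i, α i = m} → ℝ :=
  fun α => Real.sqrt (Nat.multinomial Finset.univ α.1) * ∏ i, x i ^ α.1 i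

/-- `L` is the `m`-lift `A^[m]` of the matrix `A`, i.e. `(Ax)^[m] = L x^[m]` for all `x`. -/
def IsMatrixLift (n m : ℕ) (A : Matrix (Fin n) (Fin n) ℝ)
    (L : Matrix {α : Fin n → ℕ // ∑ i, α i = m} {α : Fin n → ℕ // ∑ i, α i = m} ℝ) : Prop :=
  ∀ x : Fin n → ℝ, mLift n m (A.mulVec x) = L.mulVec (mLift n m x)

/-- The Euclidean norm of a vector in `ℝⁿ`. -/
def euclNorm {n : ℕ} (x : Fin n → ℝ) : ℝ := Real.sqrt (∑ i, x i ^ 2)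

/-- The spectral radius of a real square matrix: the supremum of the absolute values of its
complex eigenvalues. -/
def specRad {N : Type*} [Fintype N] [DecidableEq N] (M : Matrix N N ℝ) : ENNReal :=
  spectralRadius ℂ (M.map (algebraMap ℝ ℂ))

/-- The (Borel product) measurable structure on matrices, entrywise. -/
instance matrixMeasurableSpace {m n α : Type*} [MeasurableSpace α] :
    MeasurableSpace (Matrix m n α) :=
  (inferInstance : MeasurableSpace (m → n → α))

/-- `prodSeq F k ω = F_{k-1}(ω) ⋯ F_1(ω) F_0(ω)` (the empty product for `k = 0`). -/
def prodSeq {Ω : Type*} {n : ℕ} (F : ℕ → Ω → Matrix (Fin n) (Fin n) ℝ) :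
    ℕ → Ω → Matrix (Fin n) (Fin n) ℝ
  | 0 => fun _ => 1
  | k + 1 => fun ω => F k ω * prodSeq F k ω

/-- The state `x_d(k) = F_{k-1} ⋯ F_1 F_0 x₀` of the system `Σ_μ`. -/
def xd {Ω : Type*} {n : ℕ} (F : ℕ → Ω → Matrix (Fin n) (Fin n) ℝ)
    (x₀ : Fin n → ℝ) (k : ℕ) (ω : Ω) : Fin n → ℝ :=
  (prodSeq F k ω).mulVec x₀

/-- Entrywise expectation of a random matrix. -/
def matExpVal {Ω : Type*} [MeasurableSpace Ω] (P : Measure Ω) {N : Type*}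
    (M : Ω → Matrix N N ℝ) : Matrix N N ℝ :=
  Matrix.of fun i j => ∫ ω, M ω i j ∂P

/-- Exponential `m`th mean stability of `Σ_μ`. -/
def ExpMeanStable {Ω : Type*} [MeasurableSpace Ω] (P : Measure Ω) {n : ℕ}
    (F : ℕ → Ω → Matrix (Fin n) (Fin n) ℝ) (m : ℕ) : Prop :=
  ∃ a : ℝ, 0 < a ∧ ∃ b : ℝ, 0 < b ∧ ∀ x₀ : Fin n → ℝ, ∀ k : ℕ,
    (∫ ω, euclNorm (xd F x₀ k ω) ^ m ∂P) ≤ a * Real.exp (-b * k) * euclNorm x₀ ^ m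

/-- Stochastic `m`th mean stability of `Σ_μ`. -/
def StochMeanStable {Ω : Type*} [MeasurableSpace Ω] (P : Measure Ω) {n : ℕ}
    (F : ℕ → Ω → Matrix (Fin n) (Fin n) ℝ) (m : ℕ) : Prop :=
  ∀ x₀ : Fin n → ℝ, Summable fun k => ∫ ω, euclNorm (xd F x₀ k ω) ^ m ∂P

/-- Positivity of the system `Σ_μ`. -/
def PositiveSys {Ω : Type*} [MeasurableSpace Ω] (P : Measure Ω) {n : ℕ}
    (F : ℕ → Ω → Matrix (Fin n) (Fin n) ℝ) : Prop :=
  ∀ x₀ : Fin n → ℝ, (∀ i, 0 ≤ x₀ i) → ∀ k : ℕ, ∀ᵐ ω ∂P, ∀ i, 0 ≤ xd F x₀ k ω i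

/-!
Because `(A x)^[m] = A^[m] x^[m]`, we have `x_d(k+1)^[m] = F_k^[m] x_d(k)^[m]`, and `F_k` is
independent of `x_d(k)`, a function of `F_0, …, F_{k-1}`; so each entry of the expectation
factorises as `E[x_d(k+1)^[m]] = E[F_k^[m]] E[x_d(k)^[m]]`, and `E[F_k^[m]] = E[F_0^[m]]`.

A lift is only given for `F_0` (as `L`, with no measurability). Since the lifts `y^[m]` span the
whole space, a lift is unique and equals a continuous function `matrixLift` of the matrix; being a
lift is a closed condition, so `matrixLift (F_k ω)` is a lift of `F_k ω` almost surely because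
`F_k` and `F_0` have the same law. Integrability follows from
`|x^[m]_α| ≤ √(m!/α!) ‖x‖^m`.
-/

open Matrix

instance Matrix.borelSpace {ι κ : Type*} [Fintype ι] [Fintype κ] :
    BorelSpace (Matrix ι κ ℝ) :=
  inferInstanceAs (BorelSpace (ι → κ → ℝ))

abbrev MultiIndex (n m : ℕ) : Type := {α : Fin n → ℕ // ∑ i, α i = m}

section MatrixLift

variable {n m : ℕ}

lemma euclNorm_eq_norm (v : Fin n → ℝ) : euclNorm v = ‖WithLp.toLp 2 v‖ := by
  simp [euclNorm, EuclideanSpace.norm_eq]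

lemma abs_le_euclNorm (v : Fin n → ℝ) (i : Fin n) : |v i| ≤ euclNorm v := by
  simpa [euclNorm_eq_norm] using PiLp.norm_apply_le (WithLp.toLp 2 v) i

lemma euclNorm_mulVec_le (A : Matrix (Fin n) (Fin n) ℝ) (v : Fin n → ℝ) :
    euclNorm (A *ᵥ v) ≤ ‖A‖ * euclNorm v := by
  simpa [euclNorm_eq_norm] using l2_opNorm_mulVec A (WithLp.toLp 2 v)

lemma abs_mLift_le (v : Fin n → ℝ) (α : MultiIndex n m) :
    |mLift n m v α| ≤ √(Nat.multinomial Finset.univ α.1) * euclNorm v ^ m := by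
  rw [mLift, abs_mul, abs_of_nonneg (Real.sqrt_nonneg _), Finset.abs_prod]
  gcongr
  calc ∏ i, |v i ^ α.1 i| ≤ ∏ i, euclNorm v ^ α.1 i := by
        gcongr with i
        rw [abs_pow]
        exact pow_le_pow_left₀ (abs_nonneg _) (abs_le_euclNorm v i) _
    _ = euclNorm v ^ m := by rw [Finset.prod_pow_eq_pow_sum, α.2]

@[fun_prop]
lemma continuous_mLift_apply (α : MultiIndex n m) :
    Continuous fun v : Fin n → ℝ => mLift n m v α := by
  unfold mLift
  fun_prop

/-- A linear form vanishing on all lifts `x^[m]` is the polynomial `∑ cᵦ √(m!/β!) x^β`, which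
vanishes identically, so all its coefficients vanish. -/
lemma eq_zero_of_forall_dotProduct_mLift_eq_zero {c : MultiIndex n m → ℝ}
    (h : ∀ x, c ⬝ᵥ mLift n m x = 0) : c = 0 := by
  classical
  let e : (Fin n → ℕ) ≃ (Fin n →₀ ℕ) := Finsupp.equivFunOnFinite.symm
  let p : MvPolynomial (Fin n) ℝ := ∑ β : MultiIndex n m,
    MvPolynomial.monomial (e β.1) (c β * √(Nat.multinomial Finset.univ β.1))
  have hp : p = 0 := MvPolynomial.funext fun x => by
    simpa [p, e, MvPolynomial.eval_monomial, Finsupp.prod_pow, dotProduct, mLift, mul_assoc]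
      using h x
  funext β
  have hcoeff : MvPolynomial.coeff (e β.1) p = c β * √(Nat.multinomial Finset.univ β.1) := by
    simp [p, MvPolynomial.coeff_sum, MvPolynomial.coeff_monomial, e, Subtype.val_inj]
  have hpos : 0 < √(Nat.multinomial Finset.univ β.1 : ℝ) :=
    Real.sqrt_pos.2 (by exact_mod_cast Nat.multinomial_pos _ _)
  simpa [hp, hpos.ne'] using hcoeff.symm

lemma span_range_mLift : Submodule.span ℝ (Set.range (mLift n m)) = ⊤ := by
  rw [← Submodule.dualAnnihilator_eq_bot_iff, Submodule.eq_bot_iff]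
  intro f hf
  rw [Submodule.mem_dualAnnihilator] at hf
  set c : MultiIndex n m → ℝ := fun β => f fun γ => if β = γ then 1 else 0
  have hf_eq : ∀ w, f w = w ⬝ᵥ c := fun w => f.pi_apply_eq_sum_univ w
  have hc : c = 0 := eq_zero_of_forall_dotProduct_mLift_eq_zero fun x => by
    rw [dotProduct_comm, ← hf_eq]
    exact hf _ (Submodule.subset_span ⟨x, rfl⟩)
  ext w
  simp [hf_eq, hc]

def liftCoeffs (n m : ℕ) (β : MultiIndex n m) : (Fin n → ℝ) →₀ ℝ :=
  (Finsupp.mem_span_range_iff_exists_finsupp.1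
    (span_range_mLift ▸ Submodule.mem_top : Pi.single β 1 ∈ Submodule.span ℝ _)).choose

lemma liftCoeffs_sum (β : MultiIndex n m) :
    ((liftCoeffs n m β).sum fun y a => a • mLift n m y) = Pi.single β 1 :=
  (Finsupp.mem_span_range_iff_exists_finsupp.1
    (span_range_mLift ▸ Submodule.mem_top : Pi.single β 1 ∈ Submodule.span ℝ _)).choose_spec

/-- Every lift of `A` equals this matrix (`IsMatrixLift.eq_matrixLift`), but it is defined for
all `A` and is a lift of `A` only when `A` has one. -/
def matrixLift (n m : ℕ) (A : Matrix (Fin n) (Fin n) ℝ) :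
    Matrix (MultiIndex n m) (MultiIndex n m) ℝ :=
  Matrix.of fun α β => (liftCoeffs n m β).sum fun y a => a * mLift n m (A *ᵥ y) α

theorem IsMatrixLift.eq_matrixLift {A : Matrix (Fin n) (Fin n) ℝ}
    {M : Matrix (MultiIndex n m) (MultiIndex n m) ℝ} (h : IsMatrixLift n m A M) :
    M = matrixLift n m A := by
  ext α β
  have hM : ∀ y, M *ᵥ mLift n m y = mLift n m (A *ᵥ y) := fun y => (h y).symm
  have hcol := congrArg (fun w => (M *ᵥ w) α) (liftCoeffs_sum β)
  simp only [mulVec_single_one, Finsupp.sum, mulVec_sum, mulVec_smul, hM] at hcol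
  simpa [matrixLift, Finsupp.sum] using hcol.symm

@[fun_prop]
lemma continuous_matrixLift_apply (α β : MultiIndex n m) :
    Continuous fun A => matrixLift n m A α β := by
  simp only [matrixLift, of_apply, Finsupp.sum]
  fun_prop

lemma exists_abs_matrixLift_apply_le (α β : MultiIndex n m) :
    ∃ C, ∀ A, |matrixLift n m A α β| ≤ C * ‖A‖ ^ m := by
  set a := liftCoeffs n m β
  refine ⟨∑ y ∈ a.support, |a y| * (√(Nat.multinomial Finset.univ α.1) * euclNorm y ^ m),
    fun A => ?_⟩
  calc |matrixLift n m A α β| ≤ ∑ y ∈ a.support, |a y| * |mLift n m (A *ᵥ y) α| := by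
        simpa [matrixLift, Finsupp.sum, abs_mul] using
          Finset.abs_sum_le_sum_abs (fun y => a y * mLift n m (A *ᵥ y) α) a.support
    _ ≤ ∑ y ∈ a.support,
          |a y| * (√(Nat.multinomial Finset.univ α.1) * (‖A‖ * euclNorm y) ^ m) := by
        gcongr with y
        refine (abs_mLift_le _ α).trans ?_
        gcongr
        · exact Real.sqrt_nonneg _
        · exact euclNorm_mulVec_le A y
    _ = _ := by
        rw [Finset.sum_mul]
        exact Finset.sum_congr rfl fun y _ => by ring

lemma isClosed_setOf_isMatrixLift :
    IsClosed {A : Matrix (Fin n) (Fin n) ℝ | IsMatrixLift n m A (matrixLift n m A)} := by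
  simp only [IsMatrixLift, Set.ofPred_forall]
  refine isClosed_iInter fun x =>
    isClosed_eq (continuous_pi fun α => ?_) (continuous_pi fun α => ?_)
  · fun_prop
  · simp only [mulVec, dotProduct]
    fun_prop

lemma xd_succ {Ω : Type*} (F : ℕ → Ω → Matrix (Fin n) (Fin n) ℝ) (x₀ : Fin n → ℝ)
    (k : ℕ) (ω : Ω) : xd F x₀ (k + 1) ω = F k ω *ᵥ xd F x₀ k ω :=
  (mulVec_mulVec _ _ _).symm

lemma prodSeq_eq_of_forall_lt {Ω Ω' : Type*} {F : ℕ → Ω → Matrix (Fin n) (Fin n) ℝ}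
    {G : ℕ → Ω' → Matrix (Fin n) (Fin n) ℝ} {ω : Ω} {ω' : Ω'} {k : ℕ}
    (h : ∀ i < k, F i ω = G i ω') : prodSeq F k ω = prodSeq G k ω' := by
  induction k with
  | zero => rfl
  | succ k ih =>
    simp only [prodSeq]
    rw [h k k.lt_succ_self, ih fun i hi => h i (hi.trans k.lt_succ_self)]

lemma measurable_prodSeq {Ω : Type*} [MeasurableSpace Ω] {F : ℕ → Ω → Matrix (Fin n) (Fin n) ℝ}
    (hF : ∀ i, Measurable (F i)) (k : ℕ) : Measurable (prodSeq F k) := by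
  induction k with
  | zero => exact measurable_const
  | succ k ih => exact continuous_mul.measurable.comp ((hF k).prodMk ih)

lemma exists_measurable_prodSeq_eq_comp {Ω : Type*} (F : ℕ → Ω → Matrix (Fin n) (Fin n) ℝ)
    (k : ℕ) :
    ∃ φ : (Finset.range k → Matrix (Fin n) (Fin n) ℝ) → Matrix (Fin n) (Fin n) ℝ,
      Measurable φ ∧ prodSeq F k = φ ∘ fun ω i => F i ω := by
  refine ⟨prodSeq (fun i v => if h : i ∈ Finset.range k then v ⟨i, h⟩ else 1) k,
    measurable_prodSeq (fun i => ?_) k, funext fun ω => prodSeq_eq_of_forall_lt fun i hi => ?_⟩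
  · by_cases h : i ∈ Finset.range k
    · simp only [h, dite_true]
      exact measurable_pi_apply _
    · simp [h]
  · simp [Finset.mem_range.2 hi]

section Probability

open Filter

variable {Ω : Type*} [MeasurableSpace Ω] {P : Measure Ω}

lemma aemeasurable_prodSeq {F : ℕ → Ω → Matrix (Fin n) (Fin n) ℝ}
    (hF : ∀ i, AEMeasurable (F i) P) (k : ℕ) : AEMeasurable (prodSeq F k) P := by
  induction k with
  | zero => exact aemeasurable_const
  | succ k ih => exact continuous_mul.measurable.comp_aemeasurable ((hF k).prodMk ih)

theorem ProbabilityTheory.iIndepFun.indepFun_prodSeq {F : ℕ → Ω → Matrix (Fin n) (Fin n) ℝ}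
    (hind : iIndepFun F P) (hF : ∀ i, AEMeasurable (F i) P) (k : ℕ) :
    IndepFun (F k) (prodSeq F k) P := by
  obtain ⟨φ, hφ, hprod⟩ := exists_measurable_prodSeq_eq_comp F k
  rw [hprod]
  exact (hind.indepFun_finset₀ {k} (Finset.range k) (by simp) hF).comp
    (measurable_pi_apply ⟨k, Finset.mem_singleton_self k⟩) hφ

lemma integrable_norm_prodSeq_pow [IsFiniteMeasure P]
    {F : ℕ → Ω → Matrix (Fin n) (Fin n) ℝ} (hind : iIndepFun F P)
    (hF : ∀ i, AEMeasurable (F i) P) (hint : ∀ i, Integrable (fun ω => ‖F i ω‖ ^ m) P)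
    (k : ℕ) : Integrable (fun ω => ‖prodSeq F k ω‖ ^ m) P := by
  induction k with
  | zero => exact integrable_const (‖(1 : Matrix (Fin n) (Fin n) ℝ)‖ ^ m)
  | succ k ih =>
    have hpow : Measurable fun A : Matrix (Fin n) (Fin n) ℝ => ‖A‖ ^ m :=
      (continuous_norm.pow m).measurable
    have hprod : Integrable (fun ω => ‖F k ω‖ ^ m * ‖prodSeq F k ω‖ ^ m) P :=
      ((hind.indepFun_prodSeq hF k).comp hpow hpow).integrable_mul (hint k) ih
    refine hprod.mono'
      (hpow.comp_aemeasurable (aemeasurable_prodSeq hF (k + 1))).aestronglyMeasurable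
      (Eventually.of_forall fun ω => ?_)
    rw [Real.norm_of_nonneg (by positivity), ← mul_pow]
    exact pow_le_pow_left₀ (norm_nonneg _) (norm_mul_le _ _) m

lemma integrable_mLift_mulVec {B : Ω → Matrix (Fin n) (Fin n) ℝ} (hB : AEMeasurable B P)
    (hint : Integrable (fun ω => ‖B ω‖ ^ m) P) (x : Fin n → ℝ) (α : MultiIndex n m) :
    Integrable (fun ω => mLift n m (B ω *ᵥ x) α) P := by
  have hmeas : Measurable fun A : Matrix (Fin n) (Fin n) ℝ => mLift n m (A *ᵥ x) α := by
    fun_prop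
  refine (hint.mul_const (√(Nat.multinomial Finset.univ α.1) * euclNorm x ^ m)).mono'
    (hmeas.comp_aemeasurable hB).aestronglyMeasurable (Eventually.of_forall fun ω => ?_)
  calc ‖mLift n m (B ω *ᵥ x) α‖
        ≤ √(Nat.multinomial Finset.univ α.1) * euclNorm (B ω *ᵥ x) ^ m := abs_mLift_le _ α
    _ ≤ √(Nat.multinomial Finset.univ α.1) * (‖B ω‖ * euclNorm x) ^ m := by
        gcongr
        exacts [Real.sqrt_nonneg _, euclNorm_mulVec_le _ _]
    _ = _ := by ring

lemma integrable_matrixLift_apply {A : Ω → Matrix (Fin n) (Fin n) ℝ} (hA : AEMeasurable A P)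
    (hint : Integrable (fun ω => ‖A ω‖ ^ m) P) (α β : MultiIndex n m) :
    Integrable (fun ω => matrixLift n m (A ω) α β) P := by
  obtain ⟨C, hC⟩ := exists_abs_matrixLift_apply_le α β
  exact (hint.const_mul C).mono'
    ((continuous_matrixLift_apply α β).measurable.comp_aemeasurable hA).aestronglyMeasurable
    (Eventually.of_forall fun ω => hC (A ω))

theorem ProbabilityTheory.IdentDistrib.ae_isMatrixLift {Ω' : Type*} [MeasurableSpace Ω']
    {P' : Measure Ω'} {A : Ω → Matrix (Fin n) (Fin n) ℝ}
    {B : Ω' → Matrix (Fin n) (Fin n) ℝ}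
    (h : IdentDistrib A B P P') (hB : ∀ ω, ∃ M, IsMatrixLift n m (B ω) M) :
    ∀ᵐ ω ∂P, IsMatrixLift n m (A ω) (matrixLift n m (A ω)) :=
  h.symm.ae_mem_snd isClosed_setOf_isMatrixLift.measurableSet
    (Eventually.of_forall fun ω => by
      obtain ⟨M, hM⟩ := hB ω
      rw [Set.mem_ofPred_eq, ← hM.eq_matrixLift]
      exact hM)

theorem integral_mLift_mulVec_eq_of_indepFun {A : Ω → Matrix (Fin n) (Fin n) ℝ}
    {X : Ω → Fin n → ℝ} (hAX : IndepFun A X P)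
    (hlift : ∀ᵐ ω ∂P, IsMatrixLift n m (A ω) (matrixLift n m (A ω)))
    (hAint : ∀ α β, Integrable (fun ω => matrixLift n m (A ω) α β) P)
    (hXint : ∀ β, Integrable (fun ω => mLift n m (X ω) β) P) :
    (fun α => ∫ ω, mLift n m (A ω *ᵥ X ω) α ∂P) =
      matExpVal P (fun ω => matrixLift n m (A ω)) *ᵥ
        fun β => ∫ ω, mLift n m (X ω) β ∂P := by
  funext α
  have hindep : ∀ β,
      IndepFun (fun ω => matrixLift n m (A ω) α β) (fun ω => mLift n m (X ω) β) P :=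
    fun β => hAX.comp (continuous_matrixLift_apply α β).measurable
      (continuous_mLift_apply β).measurable
  calc ∫ ω, mLift n m (A ω *ᵥ X ω) α ∂P
      = ∫ ω, ∑ β, matrixLift n m (A ω) α β * mLift n m (X ω) β ∂P :=
        integral_congr_ae (hlift.mono fun ω h => congrFun (h (X ω)) α)
    _ = ∑ β, ∫ ω, matrixLift n m (A ω) α β * mLift n m (X ω) β ∂P :=
        integral_finsetSum _ fun β _ => (hindep β).integrable_mul (hAint α β) (hXint β)
    _ = ∑ β, (∫ ω, matrixLift n m (A ω) α β ∂P) * ∫ ω, mLift n m (X ω) β ∂P :=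
        Finset.sum_congr rfl fun β _ =>
          (hindep β).integral_mul_eq_mul_integral (hAint α β).1 (hXint β).1
    _ = _ := rfl

end Probability

end MatrixLift

theorem expectation_mLift_xd_general {Ω : Type*} [MeasurableSpace Ω]
    (P : Measure Ω) [IsProbabilityMeasure P] (n m : ℕ)
    (F : ℕ → Ω → Matrix (Fin n) (Fin n) ℝ)
    (hind : iIndepFun F P)
    (hid : ∀ k, IdentDistrib (F k) (F 0) P P)
    (hint : Integrable (fun ω => ‖F 0 ω‖ ^ m) P)
    (L : Ω → Matrix {α : Fin n → ℕ // ∑ i, α i = m} {α : Fin n → ℕ // ∑ i, α i = m} ℝ)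
    (hL : ∀ ω, IsMatrixLift n m (F 0 ω) (L ω))
    (x₀ : Fin n → ℝ) (k : ℕ) :
    (fun α => ∫ ω, mLift n m (xd F x₀ k ω) α ∂P)
      = (matExpVal P L ^ k).mulVec (mLift n m x₀) := by
  have hF : ∀ j, AEMeasurable (F j) P := fun j => (hid j).aemeasurable_fst
  have hFint : ∀ j, Integrable (fun ω => ‖F j ω‖ ^ m) P := fun j =>
    ((hid j).comp (continuous_norm.pow m).measurable).integrable_iff.2 hint
  have hEL : ∀ j, matExpVal P (fun ω => matrixLift n m (F j ω)) = matExpVal P L := fun j => by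
    ext α β
    simp only [matExpVal, of_apply, funext fun ω => (hL ω).eq_matrixLift]
    exact ((hid j).comp (continuous_matrixLift_apply α β).measurable).integral_eq
  induction k with
  | zero => simp [xd, prodSeq]
  | succ k ih =>
    have hindep : IndepFun (F k) (xd F x₀ k) P :=
      (hind.indepFun_prodSeq hF k).comp (ψ := (· *ᵥ x₀)) measurable_id (by fun_prop)
    have hXint : ∀ β, Integrable (fun ω => mLift n m (xd F x₀ k ω) β) P :=
      integrable_mLift_mulVec (aemeasurable_prodSeq hF k)
        (integrable_norm_prodSeq_pow hind hF hFint k) x₀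
    simp_rw [xd_succ]
    rw [integral_mLift_mulVec_eq_of_indepFun hindep
      ((hid k).ae_isMatrixLift fun ω => ⟨L ω, hL ω⟩)
      (integrable_matrixLift_apply (hF k) (hFint k)) hXint, ih, hEL, pow_succ', mulVec_mulVec]

/-- Let `(F_k)` be an i.i.d. sequence of random `n × n` matrices with
`E[‖F₀‖^m] < ∞`, and `x_d(k) = F_{k-1} ⋯ F₀ x₀` for a deterministic `x₀`.  Then for every
`k ≥ 0`, `E[x_d(k)^[m]] = (E[F₀^[m]])^k · x₀^[m]` (expectations taken entrywise). -/
theorem expectation_mLift_xd {Ω : Type*} [MeasurableSpace Ω]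
    (P : Measure Ω) [IsProbabilityMeasure P] (n m : ℕ) (hm : 0 < m)
    (F : ℕ → Ω → Matrix (Fin n) (Fin n) ℝ)
    (hind : iIndepFun F P)
    (hid : ∀ k, IdentDistrib (F k) (F 0) P P)
    (hint : Integrable (fun ω => ‖F 0 ω‖ ^ m) P)
    (L : Ω → Matrix {α : Fin n → ℕ // ∑ i, α i = m} {α : Fin n → ℕ // ∑ i, α i = m} ℝ)
    (hL : ∀ ω, IsMatrixLift n m (F 0 ω) (L ω))
    (x₀ : Fin n → ℝ) (k : ℕ) :
    (fun α => ∫ ω, mLift n m (xd F x₀ k ω) α ∂P)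
      = (matExpVal P L ^ k).mulVec (mLift n m x₀) :=
  expectation_mLift_xd_general P n m F hind hid hint L hL x₀ k
end
end

section
/- Let (Ω, ℱ, P) be a probability space, m a positive integer, C ≥ 1, r > 0, and x : [0,∞) × Ω → ℝ^n jointly measurable. Let Z_k : Ω → [0,∞), k ≥ 0, satisfy almost surely Z₀ = 0, Z_k ≤ Z_{k+1}, and C^{−1}‖x(Z_k)‖ ≤ ‖x(t)‖ whenever Z_k ≤ t ≤ Z_{k+1}. Assume that for every k ≥ 0 the cycle length R_{k+1} = Z_{k+1} − Z_k is independent of the random variable ‖x(Z_k)‖^m and satisfies E[R_{k+1}] = r. Then C^{−m} r Σ_{k=0}^{∞} E[‖x(Z_k)‖^m] ≤ ∫_0^∞ E[‖x(t)‖^m] dt. In particular, if ∫_0^∞ E[‖x(t)‖^m] dt < ∞, then Σ_{k=0}^{∞} E[‖x(Z_k)‖^m] < ∞. -/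
/-!
On a cycle `(Z_k, Z_{k+1}]` the comparison bound gives
`∫_{Z_k}^{Z_{k+1}} ‖x(t)‖^m dt ≥ C^{-m} R_{k+1} ‖x(Z_k)‖^m`, and the cycles are disjoint
subsets of `(0, ∞)`, so pathwise `C^{-m} Σ_k R_{k+1} ‖x(Z_k)‖^m ≤ ∫_0^∞ ‖x(t)‖^m dt`.
Taking expectations (Tonelli on both sides), independence factors
`E[R_{k+1} ‖x(Z_k)‖^m]` as `r E[‖x(Z_k)‖^m]`.
-/

open scoped BigOperators
open MeasureTheory ProbabilityTheory

noncomputable section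

open Set

theorem measurable_euclNorm {n : ℕ} : Measurable (euclNorm (n := n)) := by
  unfold euclNorm
  fun_prop

theorem inv_pow_mul_pow_le_pow {C a b : ℝ} (hC : 0 ≤ C) (ha : 0 ≤ a) (h : C⁻¹ * a ≤ b) (m : ℕ) :
    (C ^ m)⁻¹ * a ^ m ≤ b ^ m := by
  rw [← inv_pow, ← mul_pow]
  exact pow_le_pow_left₀ (by positivity) h m

theorem ofReal_sub_mul_le_setLIntegral_Ioc {a b : ℝ} {c : ENNReal} {f : ℝ → ENNReal}
    (h : ∀ t ∈ Ioc a b, c ≤ f t) :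
    ENNReal.ofReal (b - a) * c ≤ ∫⁻ t in Ioc a b, f t := by
  calc ENNReal.ofReal (b - a) * c = ∫⁻ _ in Ioc a b, c := by
        rw [setLIntegral_const, Real.volume_Ioc, mul_comm]
    _ ≤ ∫⁻ t in Ioc a b, f t := setLIntegral_mono' measurableSet_Ioc h

theorem tsum_ofReal_sub_mul_le_setLIntegral_Ioi {z : ℕ → ℝ} (hz : Monotone z)
    {c : ℕ → ENNReal} {f : ℝ → ENNReal} (h : ∀ k, ∀ t ∈ Ioc (z k) (z (k + 1)), c k ≤ f t) :
    ∑' k, ENNReal.ofReal (z (k + 1) - z k) * c k ≤ ∫⁻ t in Ioi (z 0), f t := by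
  have hsub : (⋃ k, Ioc (z k) (z (k + 1))) ⊆ Ioi (z 0) := by
    simp only [iUnion_subset_iff]
    exact fun k t ht => (hz (Nat.zero_le k)).trans_lt ht.1
  calc ∑' k, ENNReal.ofReal (z (k + 1) - z k) * c k
      ≤ ∑' k, ∫⁻ t in Ioc (z k) (z (k + 1)), f t :=
        ENNReal.tsum_le_tsum fun k => ofReal_sub_mul_le_setLIntegral_Ioc (h k)
    _ = ∫⁻ t in ⋃ k, Ioc (z k) (z (k + 1)), f t :=
        (lintegral_iUnion (fun _ => measurableSet_Ioc) hz.pairwise_disjoint_on_Ioc_succ f).symm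
    _ ≤ ∫⁻ t in Ioi (z 0), f t := lintegral_mono_set hsub

theorem tsum_ofReal_sub_mul_inv_pow_mul_le_setLIntegral_Ioi {C : ℝ} (hC : 0 ≤ C) {z : ℕ → ℝ}
    (hz : Monotone z) {u : ℝ → ℝ} (hu : ∀ k, 0 ≤ u (z k))
    (hcomp : ∀ k, ∀ t ∈ Ioc (z k) (z (k + 1)), C⁻¹ * u (z k) ≤ u t) (m : ℕ) :
    ∑' k, ENNReal.ofReal (z (k + 1) - z k) *
        (ENNReal.ofReal (C ^ m)⁻¹ * ENNReal.ofReal (u (z k) ^ m))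
      ≤ ∫⁻ t in Ioi (z 0), ENNReal.ofReal (u t ^ m) := by
  refine tsum_ofReal_sub_mul_le_setLIntegral_Ioi hz fun k t ht => ?_
  rw [← ENNReal.ofReal_mul (by positivity)]
  exact ENNReal.ofReal_le_ofReal <| inv_pow_mul_pow_le_pow hC (hu k) (hcomp k t ht) m

section Independence

variable {Ω : Type*} [MeasurableSpace Ω] {P : Measure Ω}

theorem lintegral_ofReal_mul_of_indepFun {R Y : Ω → ℝ} (hR : AEMeasurable R P)
    (hY : AEMeasurable Y P) (hRY : IndepFun R Y P)
    (hR_int : Integrable R P) (hR_nonneg : 0 ≤ᵐ[P] R) :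
    ∫⁻ ω, ENNReal.ofReal (R ω) * ENNReal.ofReal (Y ω) ∂P
      = ENNReal.ofReal (∫ ω, R ω ∂P) * ∫⁻ ω, ENNReal.ofReal (Y ω) ∂P := by
  rw [ofReal_integral_eq_lintegral_ofReal hR_int hR_nonneg]
  exact lintegral_mul_eq_lintegral_mul_lintegral_of_indepFun'' hR.ennreal_ofReal
    hY.ennreal_ofReal (hRY.comp ENNReal.measurable_ofReal ENNReal.measurable_ofReal)

theorem ofReal_mul_tsum_lintegral_eq_lintegral_tsum {R Y : ℕ → Ω → ℝ} {r : ℝ}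
    (hR : ∀ k, Measurable (R k)) (hY : ∀ k, Measurable (Y k)) (hRY : ∀ k, IndepFun (R k) (Y k) P)
    (hR_int : ∀ k, Integrable (R k) P) (hR_nonneg : ∀ k, 0 ≤ᵐ[P] R k)
    (hmean : ∀ k, ∫ ω, R k ω ∂P = r) :
    ENNReal.ofReal r * ∑' k, ∫⁻ ω, ENNReal.ofReal (Y k ω) ∂P
      = ∫⁻ ω, ∑' k, ENNReal.ofReal (R k ω) * ENNReal.ofReal (Y k ω) ∂P := by
  rw [← ENNReal.tsum_mul_left, lintegral_tsum fun k => by fun_prop]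
  congr 1 with k
  rw [lintegral_ofReal_mul_of_indepFun (hR k).aemeasurable (hY k).aemeasurable (hRY k)
    (hR_int k) (hR_nonneg k), hmean k]

end Independence

theorem sampled_sum_le_integral_general {Ω : Type*} [MeasurableSpace Ω]
    (P : Measure Ω) [IsProbabilityMeasure P]
    (n m : ℕ) (C r : ℝ) (hC : 1 ≤ C) (hr : 0 < r)
    (x : ℝ → Ω → Fin n → ℝ)
    (hxmeas : Measurable (Function.uncurry x))
    (Z : ℕ → Ω → ℝ) (hZmeas : ∀ k, Measurable (Z k))
    (hZ : ∀ᵐ ω ∂P,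
      Z 0 ω = 0 ∧
      (∀ k, Z k ω ≤ Z (k + 1) ω) ∧
      (∀ k, ∀ t, Z k ω ≤ t → t ≤ Z (k + 1) ω →
        C⁻¹ * euclNorm (x (Z k ω) ω) ≤ euclNorm (x t ω)))
    (hindep : ∀ k : ℕ,
      IndepFun (fun ω => Z (k + 1) ω - Z k ω)
        (fun ω => euclNorm (x (Z k ω) ω) ^ m) P)
    (hmean : ∀ k : ℕ, (∫ ω, (Z (k + 1) ω - Z k ω) ∂P) = r) :
    (ENNReal.ofReal ((C ^ m)⁻¹ * r) *
        ∑' k : ℕ, ∫⁻ ω, ENNReal.ofReal (euclNorm (x (Z k ω) ω) ^ m) ∂P)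
      ≤ ∫⁻ t in Set.Ioi (0 : ℝ), ∫⁻ ω, ENNReal.ofReal (euclNorm (x t ω) ^ m) ∂P ∧
    ((∫⁻ t in Set.Ioi (0 : ℝ), ∫⁻ ω, ENNReal.ofReal (euclNorm (x t ω) ^ m) ∂P) < ⊤ →
      (∑' k : ℕ, ∫⁻ ω, ENNReal.ofReal (euclNorm (x (Z k ω) ω) ^ m) ∂P) < ⊤) := by
  have hC0 : 0 ≤ C := zero_le_one.trans hC
  have hY : ∀ k, Measurable fun ω => euclNorm (x (Z k ω) ω) ^ m := fun k =>
    (measurable_euclNorm.comp (hxmeas.comp ((hZmeas k).prodMk measurable_id))).pow_const m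
  have hpath : ∀ᵐ ω ∂P, ∑' k, ENNReal.ofReal (Z (k + 1) ω - Z k ω) *
      (ENNReal.ofReal (C ^ m)⁻¹ * ENNReal.ofReal (euclNorm (x (Z k ω) ω) ^ m))
        ≤ ∫⁻ t in Ioi (0 : ℝ), ENNReal.ofReal (euclNorm (x t ω) ^ m) := by
    filter_upwards [hZ] with ω ⟨hZ0, hZmono, hcomp⟩
    rw [← hZ0]
    exact tsum_ofReal_sub_mul_inv_pow_mul_le_setLIntegral_Ioi (u := fun t => euclNorm (x t ω))
      hC0 (monotone_nat_of_le_succ hZmono) (fun _ => Real.sqrt_nonneg _)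
      (fun k t ht => hcomp k t ht.1.le ht.2) m
  have hmain := calc
    ENNReal.ofReal ((C ^ m)⁻¹ * r) *
        ∑' k, ∫⁻ ω, ENNReal.ofReal (euclNorm (x (Z k ω) ω) ^ m) ∂P
      = ENNReal.ofReal (C ^ m)⁻¹ * ∫⁻ ω, ∑' k, ENNReal.ofReal (Z (k + 1) ω - Z k ω) *
          ENNReal.ofReal (euclNorm (x (Z k ω) ω) ^ m) ∂P := by
        rw [ENNReal.ofReal_mul (by positivity), mul_assoc,
          ofReal_mul_tsum_lintegral_eq_lintegral_tsum (R := fun k ω => Z (k + 1) ω - Z k ω)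
            (fun k => (hZmeas (k + 1)).sub (hZmeas k))
            hY hindep (fun k => .of_integral_ne_zero (by rw [hmean k]; exact hr.ne'))
            (fun k => by filter_upwards [hZ] with ω hω using sub_nonneg.2 (hω.2.1 k)) hmean]
    _ ≤ ∫⁻ ω, (∫⁻ t in Ioi (0 : ℝ), ENNReal.ofReal (euclNorm (x t ω) ^ m)) ∂P := by
        rw [← lintegral_const_mul' _ _ ENNReal.ofReal_ne_top]
        simp_rw [← ENNReal.tsum_mul_left, mul_left_comm (ENNReal.ofReal (C ^ m)⁻¹)]
        exact lintegral_mono_ae hpath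
    _ = ∫⁻ t in Ioi (0 : ℝ), ∫⁻ ω, ENNReal.ofReal (euclNorm (x t ω) ^ m) ∂P :=
        (lintegral_lintegral_swap
          ((measurable_euclNorm.comp hxmeas).pow_const m).ennreal_ofReal.aemeasurable).symm
  refine ⟨hmain, fun hfin => ENNReal.lt_top_of_mul_ne_top_right (hmain.trans_lt hfin).ne ?_⟩
  exact (ENNReal.ofReal_pos.2 (by positivity)).ne'

/-- Under the lower cycle comparison `C⁻¹‖x(Z_k)‖ ≤ ‖x(t)‖` on
`[Z_k, Z_{k+1}]`, with each cycle length `R_{k+1} = Z_{k+1} - Z_k` independent of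
`‖x(Z_k)‖^m` and of mean `r`, one has
`C^{-m} r Σ_k E[‖x(Z_k)‖^m] ≤ ∫₀^∞ E[‖x(t)‖^m] dt`; in particular finiteness of the
right-hand side forces summability of the sampled `m`th moments. -/
theorem sampled_sum_le_integral {Ω : Type*} [MeasurableSpace Ω]
    (P : Measure Ω) [IsProbabilityMeasure P]
    (n m : ℕ) (hm : 0 < m) (C r : ℝ) (hC : 1 ≤ C) (hr : 0 < r)
    (x : ℝ → Ω → Fin n → ℝ)
    (hxmeas : Measurable (Function.uncurry x))
    (Z : ℕ → Ω → ℝ) (hZmeas : ∀ k, Measurable (Z k))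
    (hZ : ∀ᵐ ω ∂P,
      Z 0 ω = 0 ∧
      (∀ k, Z k ω ≤ Z (k + 1) ω) ∧
      (∀ k, ∀ t, Z k ω ≤ t → t ≤ Z (k + 1) ω →
        C⁻¹ * euclNorm (x (Z k ω) ω) ≤ euclNorm (x t ω)))
    (hindep : ∀ k : ℕ,
      IndepFun (fun ω => Z (k + 1) ω - Z k ω)
        (fun ω => euclNorm (x (Z k ω) ω) ^ m) P)
    (hmean : ∀ k : ℕ, (∫ ω, (Z (k + 1) ω - Z k ω) ∂P) = r) :
    (ENNReal.ofReal ((C ^ m)⁻¹ * r) *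
        ∑' k : ℕ, ∫⁻ ω, ENNReal.ofReal (euclNorm (x (Z k ω) ω) ^ m) ∂P)
      ≤ ∫⁻ t in Set.Ioi (0 : ℝ), ∫⁻ ω, ENNReal.ofReal (euclNorm (x t ω) ^ m) ∂P ∧
    ((∫⁻ t in Set.Ioi (0 : ℝ), ∫⁻ ω, ENNReal.ofReal (euclNorm (x t ω) ^ m) ∂P) < ⊤ →
      (∑' k : ℕ, ∫⁻ ω, ENNReal.ofReal (euclNorm (x (Z k ω) ω) ^ m) ∂P) < ⊤) :=
  sampled_sum_le_integral_general P n m C r hC hr x hxmeas Z hZmeas hZ hindep hmean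

end
end
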